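/- Krawtchouk duality in two variables: let k_n(x; q; N) = (-N)_n · ∑_{j=0}^{n} ((-n)_j(-x)_j)/((-N)_j j!) · q^{-j} denote the (unnormalized) one-variable Krawtchouk polynomial, and define K₂(n₁,n₂; x₁,x₂; 𝔭₁,𝔭₂; N) = (1/(-N)_{n₁+n₂}) · k_{n₁}(x₁; 𝔭₁; N-n₂) · k_{n₂}(x₂; 𝔭₂/(1-𝔭₁); N-x₁). Define dual parameters 𝔭̃₁, 𝔭̃₂ by 𝔭_k = 𝔭̃_{3-k}(1-|𝔭̃|)/((1-P̃₁^{3-k})(1-P̃₁^{2-k})) for k=1,2, where P̃₁^j = 𝔭̃₁+⋯+𝔭̃_j, P̃₁^0 = 0, |𝔭̃| = 𝔭̃₁+𝔭̃₂. Then for all n₁,n₂,x₁,x₂ ∈ ℕ₀: K₂(n₁,n₂; x₁,x₂; 𝔭₁,𝔭₂; N) = K₂(x₂,x₁; n₂,n₁; 𝔭̃₁,𝔭̃₂; N). -/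

import Mathlib

/-- Pochhammer symbol `(a)_n = a(a+1)⋯(a+n-1)` for real `a`. -/
noncomputable def poch (a : ℝ) (n : ℕ) : ℝ := ∏ j ∈ Finset.range n, (a + (j : ℝ))

/-- One-variable (unnormalized) Krawtchouk polynomial
`k_n(x;q;N) = (-N)_n ∑_{j=0}^n ((-n)_j(-x)_j)/((-N)_j j!) q^{-j}`. -/
noncomputable def kraw (n : ℕ) (x q N : ℝ) : ℝ :=
  poch (-N) n * ∑ j ∈ Finset.range (n + 1),
    poch (-(n : ℝ)) j * poch (-x) j / (poch (-N) j * (Nat.factorial j : ℝ)) * q⁻¹ ^ j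

/-- Two-variable Krawtchouk polynomial
`K₂(n₁,n₂;x₁,x₂;𝔭₁,𝔭₂;N) = (1/(-N)_{n₁+n₂}) k_{n₁}(x₁;𝔭₁;N-n₂) k_{n₂}(x₂;𝔭₂/(1-𝔭₁);N-x₁)`. -/
noncomputable def K2 (n1 n2 : ℕ) (x1 x2 p1 p2 N : ℝ) : ℝ :=
  (poch (-N) (n1 + n2))⁻¹ * kraw n1 x1 p1 (N - (n2 : ℝ)) * kraw n2 x2 (p2 / (1 - p1)) (N - x1)

lemma poch_add (a : ℝ) (m n : ℕ) : poch a (m + n) = poch a m * poch (a + m) n := by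
  unfold poch
  rw [Finset.prod_range_add]
  congr 1
  refine Finset.prod_congr rfl fun j _ => ?_
  push_cast
  ring

lemma poch_nat_eq_zero {n j : ℕ} (h : n < j) : poch (-(n : ℝ)) j = 0 := by
  refine Finset.prod_eq_zero (Finset.mem_range.mpr h) ?_
  simp

lemma kraw_symm (q M : ℝ) (n x : ℕ) :
    poch (-M) x * kraw n (x : ℝ) q M = poch (-M) n * kraw x (n : ℝ) q M := by
  have hext : ∀ a b : ℕ,
      (∑ j ∈ Finset.range (a + 1),
        poch (-(a : ℝ)) j * poch (-(b : ℝ)) j / (poch (-M) j * (Nat.factorial j : ℝ)) * q⁻¹ ^ j)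
      = ∑ j ∈ Finset.range (max a b + 1),
        poch (-(a : ℝ)) j * poch (-(b : ℝ)) j / (poch (-M) j * (Nat.factorial j : ℝ)) * q⁻¹ ^ j := by
    intro a b
    refine Finset.sum_subset (Finset.range_subset_range.mpr (by omega)) fun j _ hj => ?_
    have hj' : a < j := by
      simp only [Finset.mem_range] at hj
      omega
    rw [poch_nat_eq_zero hj']
    ring
  have hS : (∑ j ∈ Finset.range (n + 1),
        poch (-(n : ℝ)) j * poch (-(x : ℝ)) j / (poch (-M) j * (Nat.factorial j : ℝ)) * q⁻¹ ^ j)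
      = ∑ j ∈ Finset.range (x + 1),
        poch (-(x : ℝ)) j * poch (-(n : ℝ)) j / (poch (-M) j * (Nat.factorial j : ℝ)) * q⁻¹ ^ j := by
    rw [hext n x, hext x n, max_comm]
    exact Finset.sum_congr rfl fun j _ => by ring
  unfold kraw
  rw [hS]
  ring

/-- Krawtchouk duality in two variables: if
`𝔭_k = 𝔭̃_{3-k}(1-|𝔭̃|)/((1-P̃₁^{3-k})(1-P̃₁^{2-k}))` for `k = 1,2`, then
`K₂(n₁,n₂;x₁,x₂;𝔭₁,𝔭₂;N) = K₂(x₂,x₁;n₂,n₁;𝔭̃₁,𝔭̃₂;N)` for all `n₁,n₂,x₁,x₂ ∈ ℕ₀`. -/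
theorem krawtchouk_duality_two_variables
    (N p1 p2 q1 q2 : ℝ)
    (h1 : 1 - p1 ≠ 0) (h2 : 1 - q1 ≠ 0) (h3 : 1 - (q1 + q2) ≠ 0)
    (hp1 : p1 ≠ 0) (hp2 : p2 ≠ 0) (hq1 : q1 ≠ 0) (hq2 : q2 ≠ 0)
    (hN : ∀ m j : ℕ, poch (-(N - (m : ℝ))) j ≠ 0)
    (hd1 : p1 = q2 * (1 - (q1 + q2)) / ((1 - (q1 + q2)) * (1 - q1)))
    (hd2 : p2 = q1 * (1 - (q1 + q2)) / ((1 - q1) * (1 - 0))) :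
    ∀ n1 n2 x1 x2 : ℕ,
      K2 n1 n2 (x1 : ℝ) (x2 : ℝ) p1 p2 N = K2 x2 x1 (n2 : ℝ) (n1 : ℝ) q1 q2 N := by
  have hp1Q : p1 = q2 / (1 - q1) := by
    rw [hd1]
    field_simp
  have hpQ : p2 / (1 - p1) = q1 := by
    rw [div_eq_iff h1, hd2, hp1Q]
    field_simp
    try ring
    try tauto
  intro n1 n2 x1 x2
  unfold K2
  rw [hpQ, hp1Q]
  -- abbreviations
  set A := poch (-N) n2 with hA'
  set B := poch (-(N - (n2 : ℝ))) n1 with hB'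
  set C := poch (-N) x1 with hC'
  set D := poch (-(N - (x1 : ℝ))) x2 with hD'
  set E := poch (-(N - (x1 : ℝ))) n2 with hE'
  set F := poch (-(N - (n2 : ℝ))) x1 with hF'
  have hA : A ≠ 0 := by have := hN 0 n2; simpa using this
  have hB : B ≠ 0 := hN n2 n1
  have hC : C ≠ 0 := by have := hN 0 x1; simpa using this
  have hD : D ≠ 0 := hN x1 x2
  have hE : E ≠ 0 := hN x1 n2
  have hF : F ≠ 0 := hN n2 x1
  have e1 : poch (-N) (n1 + n2) = A * B := by
    rw [Nat.add_comm, poch_add]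
    congr 2
    push_cast; ring
  have e2 : poch (-N) (x2 + x1) = C * D := by
    rw [Nat.add_comm, poch_add]
    congr 2
    push_cast; ring
  have hCE : C * E = A * F := by
    rw [hA', hC', hE', hF']
    have e3 : poch (-N) (x1 + n2) = poch (-N) x1 * poch (-(N - (x1 : ℝ))) n2 := by
      rw [poch_add]; congr 2; push_cast; ring
    have e4 : poch (-N) (x1 + n2) = poch (-N) n2 * poch (-(N - (n2 : ℝ))) x1 := by
      rw [Nat.add_comm, poch_add]; congr 2; push_cast; ring
    rw [← e3, e4]
  have key1 : D * kraw n2 (x2 : ℝ) q1 (N - (x1 : ℝ)) = E * kraw x2 (n2 : ℝ) q1 (N - (x1 : ℝ)) :=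
    kraw_symm q1 (N - (x1 : ℝ)) n2 x2
  have key2 : F * kraw n1 (x1 : ℝ) (q2 / (1 - q1)) (N - (n2 : ℝ))
      = B * kraw x1 (n1 : ℝ) (q2 / (1 - q1)) (N - (n2 : ℝ)) :=
    kraw_symm (q2 / (1 - q1)) (N - (n2 : ℝ)) n1 x1
  have r1 : kraw x2 (n2 : ℝ) q1 (N - (x1 : ℝ)) = D * kraw n2 (x2 : ℝ) q1 (N - (x1 : ℝ)) / E := by
    rw [eq_div_iff hE]
    linear_combination -key1
  have r2 : kraw x1 (n1 : ℝ) (q2 / (1 - q1)) (N - (n2 : ℝ))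
      = F * kraw n1 (x1 : ℝ) (q2 / (1 - q1)) (N - (n2 : ℝ)) / B := by
    rw [eq_div_iff hB]
    linear_combination -key2
  rw [e1, e2, r1, r2]
  field_simp
  linear_combination (kraw n1 (x1:ℝ) (q2/(1-q1)) (N - (n2:ℝ)) * kraw n2 (x2:ℝ) q1 (N - (x1:ℝ))) * hCE
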